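/- Let f be a continuous 2π-periodic function which is C^{1+α} for some α ∈ (0,1], i.e. f is C¹ and f' is α-Hölder continuous, and let ρ be its limit covariance function. Then there exists a finite constant C such that for all t, |ρ''(t) − ρ''(0)| ≤ C |t|^α. -/

import Mathlib

/-!
Write `g = f ∗ f̌`. Then `ρ(u) = ∫₀¹ g(su) ds`, so `ρ''(u) = ∫₀¹ s² g''(su) ds`, and it suffices
that `g''` is `α`-Hölder. Up to the factor `1/2π`, `g(x)` is the cross-correlation
`∫₀^{2π} f(v - x) f(v) dv`; after one differentiation, periodicity moves the shift onto the
other factor, so that `g''(x) = -(1/2π) ∫₀^{2π} f'(v + x) f'(v) dv`, which inherits the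
Hölder bound of `f'`.
-/

open MeasureTheory Filter Set

noncomputable section

/-- Convolution `(g∗h)(x) := (1/2π)∫₀^{2π} g(u)h(x−u) du`. -/
def conv (g h : ℝ → ℝ) (x : ℝ) : ℝ :=
  (1 / (2 * Real.pi)) * ∫ u in (0:ℝ)..(2 * Real.pi), g u * h (x - u)

/-- `f̌(x) := f(−x)`. -/
def checkFn (f : ℝ → ℝ) : ℝ → ℝ := fun x => f (-x)

/-- Limit covariance function: `ρ(u) := (1/u)∫₀^u (f∗f̌)(x) dx` for `u ≠ 0`,
`ρ(0) := (1/2π)∫₀^{2π} f(t)² dt`. -/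
def rho (f : ℝ → ℝ) (u : ℝ) : ℝ :=
  if u = 0 then (1 / (2 * Real.pi)) * ∫ t in (0:ℝ)..(2 * Real.pi), (f t) ^ 2
  else (1 / u) * ∫ x in (0:ℝ)..u, conv f (checkFn f) x

theorem intervalIntegral.hasDerivAt_integral_of_continuous {F F' : ℝ → ℝ → ℝ} {a b : ℝ}
    (x₀ : ℝ) (hF : Continuous fun z : ℝ × ℝ => F z.1 z.2)
    (hF' : Continuous fun z : ℝ × ℝ => F' z.1 z.2)
    (hd : ∀ x t, HasDerivAt (fun y => F y t) (F' x t) x) :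
    HasDerivAt (fun x => ∫ t in a..b, F x t) (∫ t in a..b, F' x₀ t) x₀ := by
  obtain ⟨M, hM⟩ := ((isCompact_closedBall x₀ 1).prod (isCompact_uIcc (a := a) (b := b)))
    |>.exists_bound_of_continuousOn hF'.continuousOn
  have hFx : ∀ x, Continuous (F x) := fun x => hF.comp (Continuous.prodMk_right x)
  refine (intervalIntegral.hasDerivAt_integral_of_dominated_loc_of_deriv_le
    (bound := fun _ => M) (Metric.ball_mem_nhds x₀ one_pos)
    (.of_forall fun x => (hFx x).aestronglyMeasurable) ((hFx x₀).intervalIntegrable a b)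
    (hF'.comp (Continuous.prodMk_right x₀)).aestronglyMeasurable
    (.of_forall fun t ht x hx => hM (x, t) ⟨Metric.ball_subset_closedBall hx,
      uIoc_subset_uIcc ht⟩)
    intervalIntegrable_const (.of_forall fun t _ x _ => hd x t)).2

theorem Function.Periodic.deriv {𝕜 F : Type*} [NontriviallyNormedField 𝕜] [NormedAddCommGroup F]
    [NormedSpace 𝕜 F] {f : 𝕜 → F} {c : 𝕜} (hf : Function.Periodic f c) :
    Function.Periodic (deriv f) c := fun x => by
  conv_lhs => rw [← deriv_comp_add_const, show (fun y => f (y + c)) = f from funext hf]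

def crossCorr (p q : ℝ → ℝ) (x : ℝ) : ℝ :=
  ∫ v in (0:ℝ)..(2 * Real.pi), p (v + x) * q v

theorem conv_checkFn_eq_crossCorr (f : ℝ → ℝ) (x : ℝ) :
    conv f (checkFn f) x = 1 / (2 * Real.pi) * crossCorr f f (-x) := by
  simp only [conv, checkFn, crossCorr, neg_sub]
  congr 1
  exact intervalIntegral.integral_congr fun u _ => by rw [mul_comm, sub_eq_add_neg]

theorem crossCorr_comm {p q : ℝ → ℝ} (hp : Function.Periodic p (2 * Real.pi))
    (hq : Function.Periodic q (2 * Real.pi)) (x : ℝ) :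
    crossCorr p q x = crossCorr q p (-x) := by
  have hφ : Function.Periodic (fun w => p w * q (w - x)) (2 * Real.pi) :=
    hp.mul (hq.sub_const x)
  calc crossCorr p q x = ∫ w in 0 + x..2 * Real.pi + x, p w * q (w - x) := by
        rw [← intervalIntegral.integral_comp_add_right (fun w => p w * q (w - x))]
        simp only [crossCorr, add_sub_cancel_right]
    _ = ∫ w in x..x + 2 * Real.pi, p w * q (w - x) := by rw [zero_add, add_comm]
    _ = ∫ w in (0:ℝ)..0 + 2 * Real.pi, p w * q (w - x) := hφ.intervalIntegral_add_eq x 0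
    _ = crossCorr q p (-x) := by
        rw [zero_add, crossCorr]
        exact intervalIntegral.integral_congr fun w _ => by rw [mul_comm, sub_eq_add_neg]

theorem continuous_crossCorr {p q : ℝ → ℝ} (hp : Continuous p) (hq : Continuous q) :
    Continuous (crossCorr p q) :=
  intervalIntegral.continuous_parametric_intervalIntegral_of_continuous'
    (by fun_prop) _ _

theorem hasDerivAt_crossCorr {p p' q : ℝ → ℝ} (hp : ∀ x, HasDerivAt p (p' x) x)
    (hp' : Continuous p') (hq : Continuous q) (x : ℝ) :
    HasDerivAt (crossCorr p q) (crossCorr p' q x) x := by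
  have hpc : Continuous p := continuous_iff_continuousAt.2 fun x => (hp x).continuousAt
  refine intervalIntegral.hasDerivAt_integral_of_continuous (F := fun y v => p (v + y) * q v)
    (F' := fun y v => p' (v + y) * q v) x (by fun_prop) (by fun_prop) fun y v => ?_
  simpa using ((hp (v + y)).comp y ((hasDerivAt_id y).const_add v)).mul_const (q v)

theorem abs_crossCorr_sub_le {p q : ℝ → ℝ} {C α : ℝ} (hpc : Continuous p) (hq : Continuous q)
    (hp : ∀ s t, |p t - p s| ≤ C * |t - s| ^ α) (x y : ℝ) :
    |crossCorr p q y - crossCorr p q x|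
      ≤ C * (∫ v in (0:ℝ)..(2 * Real.pi), |q v|) * |y - x| ^ α := by
  have h2π : (0:ℝ) ≤ 2 * Real.pi := Real.two_pi_pos.le
  have hint : ∀ z, IntervalIntegrable (fun v => p (v + z) * q v) volume 0 (2 * Real.pi) :=
    fun z => Continuous.intervalIntegrable (by fun_prop) _ _
  calc |crossCorr p q y - crossCorr p q x|
      = |∫ v in (0:ℝ)..(2 * Real.pi), (p (v + y) - p (v + x)) * q v| := by
        rw [crossCorr, crossCorr, ← intervalIntegral.integral_sub (hint y) (hint x)]
        simp only [sub_mul]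
    _ ≤ ∫ v in (0:ℝ)..(2 * Real.pi), |(p (v + y) - p (v + x)) * q v| :=
        intervalIntegral.abs_integral_le_integral_abs h2π
    _ ≤ ∫ v in (0:ℝ)..(2 * Real.pi), C * |y - x| ^ α * |q v| := by
        refine intervalIntegral.integral_mono_on h2π
          (Continuous.intervalIntegrable (by fun_prop) _ _)
          (Continuous.intervalIntegrable (by fun_prop) _ _) fun v _ => ?_
        rw [abs_mul]
        gcongr
        simpa only [add_sub_add_left_eq_sub] using hp (v + x) (v + y)
    _ = C * (∫ v in (0:ℝ)..(2 * Real.pi), |q v|) * |y - x| ^ α := by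
        rw [intervalIntegral.integral_const_mul]
        ring

theorem hasDerivAt_integral_pow_mul_comp_mul {g g' : ℝ → ℝ} (hg : ∀ x, HasDerivAt g (g' x) x)
    (hg' : Continuous g') (n : ℕ) (u : ℝ) :
    HasDerivAt (fun u => ∫ s in (0:ℝ)..1, s ^ n * g (s * u))
      (∫ s in (0:ℝ)..1, s ^ (n + 1) * g' (s * u)) u := by
  have hgc : Continuous g := continuous_iff_continuousAt.2 fun x => (hg x).continuousAt
  refine intervalIntegral.hasDerivAt_integral_of_continuous (F := fun u s => s ^ n * g (s * u))
    (F' := fun u s => s ^ (n + 1) * g' (s * u)) u (by fun_prop) (by fun_prop) fun x s => ?_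
  exact (((hg (s * x)).comp x ((hasDerivAt_id x).const_mul s)).const_mul (s ^ n)).congr_deriv
    (by ring)

theorem abs_integral_sq_mul_comp_mul_sub_le {h : ℝ → ℝ} (hh : Continuous h) {K α : ℝ}
    (hα : 0 ≤ α) (hK : ∀ x, |h x - h 0| ≤ K * |x| ^ α) (t : ℝ) :
    |(∫ s in (0:ℝ)..1, s ^ 2 * h (s * t)) - ∫ s in (0:ℝ)..1, s ^ 2 * h (s * 0)|
      ≤ K * |t| ^ α := by
  have hK0 : 0 ≤ K := by simpa using (abs_nonneg _).trans (hK 1)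
  have hint : ∀ z, IntervalIntegrable (fun s => s ^ 2 * h (s * z)) volume 0 1 :=
    fun z => Continuous.intervalIntegrable (by fun_prop) _ _
  have hpt : ∀ s ∈ uIoc (0:ℝ) 1, ‖s ^ 2 * h (s * t) - s ^ 2 * h (s * 0)‖ ≤ K * |t| ^ α := by
    intro s hs
    rw [uIoc_of_le zero_le_one] at hs
    obtain ⟨hs0, hs1⟩ := hs
    have hst : |s * t| ≤ |t| := by
      rw [abs_mul, abs_of_pos hs0]
      exact mul_le_of_le_one_left (abs_nonneg t) hs1
    calc ‖s ^ 2 * h (s * t) - s ^ 2 * h (s * 0)‖ = s ^ 2 * |h (s * t) - h 0| := by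
          rw [Real.norm_eq_abs, mul_zero, ← mul_sub, abs_mul, abs_of_nonneg (sq_nonneg s)]
      _ ≤ 1 * (K * |t| ^ α) := by
          gcongr
          · nlinarith
          · exact (hK _).trans (by gcongr)
      _ = K * |t| ^ α := one_mul _
  rw [← intervalIntegral.integral_sub (hint t) (hint 0)]
  simpa using intervalIntegral.norm_integral_le_of_norm_le_const hpt

theorem rho_eq_integral_conv (f : ℝ → ℝ) (u : ℝ) :
    rho f u = ∫ s in (0:ℝ)..1, conv f (checkFn f) (s * u) := by
  rcases eq_or_ne u 0 with rfl | hu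
  · simp [rho, conv, checkFn, sq]
  · rw [rho, if_neg hu, intervalIntegral.integral_comp_mul_right _ hu]
    simp [div_eq_inv_mul]

theorem hasDerivAt_conv_checkFn {f : ℝ → ℝ} (hper : Function.Periodic f (2 * Real.pi))
    (hf : ContDiff ℝ 1 f) (x : ℝ) :
    HasDerivAt (conv f (checkFn f)) (-(1 / (2 * Real.pi)) * crossCorr f (deriv f) x) x := by
  have hf' : ∀ y, HasDerivAt f (deriv f y) y :=
    fun y => (hf.differentiable one_ne_zero y).hasDerivAt
  have hcorr := (hasDerivAt_crossCorr hf' (hf.continuous_deriv le_rfl) hf.continuous (-x)).comp x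
    (hasDerivAt_neg x)
  rw [funext (conv_checkFn_eq_crossCorr f)]
  refine (hcorr.const_mul (1 / (2 * Real.pi))).congr_deriv ?_
  rw [crossCorr_comm hper.deriv hper, neg_neg]
  ring

theorem statement8_general (f : ℝ → ℝ)
    (hper : Function.Periodic f (2 * Real.pi))
    (α : ℝ) (hα : α ∈ Set.Ioc (0:ℝ) 1)
    (hC1 : ContDiff ℝ 1 f)
    (hHolder : ∃ C : ℝ, ∀ s t : ℝ, |deriv f t - deriv f s| ≤ C * |t - s| ^ α) :
    ∃ C : ℝ, ∀ t : ℝ,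
      |deriv (deriv (rho f)) t - deriv (deriv (rho f)) 0| ≤ C * |t| ^ α := by
  obtain ⟨C, hC⟩ := hHolder
  set c := 1 / (2 * Real.pi)
  set f' := deriv f
  have hf'c : Continuous f' := hC1.continuous_deriv le_rfl
  have hf' : ∀ x, HasDerivAt f (f' x) x := fun x => (hC1.differentiable one_ne_zero x).hasDerivAt
  set g1 := fun x => -c * crossCorr f f' x
  set g2 := fun x => -c * crossCorr f' f' x
  have hg1 : ∀ x, HasDerivAt g1 (g2 x) x :=
    fun x => (hasDerivAt_crossCorr hf' hf'c hf'c x).const_mul (-c)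
  have hg2c : Continuous g2 := (continuous_crossCorr hf'c hf'c).const_mul (-c)
  have hρ' : ∀ u, HasDerivAt (rho f) (∫ s in (0:ℝ)..1, s ^ 1 * g1 (s * u)) u := fun u => by
    rw [funext (rho_eq_integral_conv f)]
    simpa only [pow_zero, one_mul] using hasDerivAt_integral_pow_mul_comp_mul (g' := g1)
      (hasDerivAt_conv_checkFn hper hC1)
      ((continuous_crossCorr hC1.continuous hf'c).const_mul _) 0 u
  have hρ'' : deriv (deriv (rho f)) = fun u => ∫ s in (0:ℝ)..1, s ^ 2 * g2 (s * u) := by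
    rw [funext fun u => (hρ' u).deriv]
    exact funext fun u => (hasDerivAt_integral_pow_mul_comp_mul hg1 hg2c 1 u).deriv
  refine ⟨c * (C * ∫ v in (0:ℝ)..(2 * Real.pi), |f' v|), fun t => ?_⟩
  rw [hρ'']
  refine abs_integral_sq_mul_comp_mul_sub_le hg2c hα.1.le (fun x => ?_) t
  calc |g2 x - g2 0| = c * |crossCorr f' f' x - crossCorr f' f' 0| := by
        rw [← mul_sub, abs_mul, abs_neg, abs_of_pos (by positivity)]
    _ ≤ c * (C * (∫ v in (0:ℝ)..(2 * Real.pi), |f' v|) * |x - 0| ^ α) := by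
        gcongr
        exact abs_crossCorr_sub_le hf'c hf'c hC 0 x
    _ = c * (C * ∫ v in (0:ℝ)..(2 * Real.pi), |f' v|) * |x| ^ α := by
        rw [sub_zero]
        ring

theorem statement8 (f : ℝ → ℝ) (hcont : Continuous f)
    (hper : Function.Periodic f (2 * Real.pi))
    (α : ℝ) (hα : α ∈ Set.Ioc (0:ℝ) 1)
    (hC1 : ContDiff ℝ 1 f)
    (hHolder : ∃ C : ℝ, ∀ s t : ℝ, |deriv f t - deriv f s| ≤ C * |t - s| ^ α) :
    ∃ C : ℝ, ∀ t : ℝ,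
      |deriv (deriv (rho f)) t - deriv (deriv (rho f)) 0| ≤ C * |t| ^ α :=
  statement8_general f hper α hα hC1 hHolder

end
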